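/- Let n = ∑_{i=1}^r ∑_{k=l_i}^{m_i} 2^k be the decomposition of n into maximal blocks of consecutive binary digits (m_1 ≥ l_1 > l_1 − 2 ≥ m_2 ≥ ... ≥ m_r ≥ l_r ≥ 0). Then there is an absolute constant c such that |n K_n| ≤ c ∑_{A=1}^r ( 2^{l_A} |K_{2^{l_A}}| + 2^{m_A} |K_{2^{m_A}}| + 2^{l_A} ∑_{k=l_A}^{m_A} D_{2^k} ) + c V(n) pointwise on G, where V(n) = n_0 + ∑_{k≥1} |n_k − n_{k−1}| is the binary variation of n. -/

import Mathlib

open MeasureTheory Filter Topology ENNReal NNReal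

noncomputable section

/-- The dyadic group `G = (ℤ/2)^ℕ`. -/
abbrev G : Type := ℕ → ZMod 2

instance : TopologicalSpace (ZMod 2) := ⊥
instance : DiscreteTopology (ZMod 2) := ⟨rfl⟩
instance : MeasurableSpace G := borel G
instance : BorelSpace G := ⟨rfl⟩

/-- Normalized Haar measure on `G`. -/
def μG : Measure G := Measure.addHaarMeasure ⟨⟨Set.univ, isCompact_univ⟩, by simp⟩

/-- Cylinder `I_n(x) = {y : y_0 = x_0, ..., y_{n-1} = x_{n-1}}`. -/
def cyl (n : ℕ) (x : G) : Set G := {y | ∀ k < n, y k = x k}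

/-- `I_n = I_n(0)`. -/
def I₀ (n : ℕ) : Set G := cyl n 0

/-- `e t`: the element of `G` with a single 1 in coordinate `t`. -/
def e (t : ℕ) : G := fun k => if k = t then 1 else 0

/-- Rademacher functions `r_k(x) = (-1)^{x_k}`. -/
def rade (k : ℕ) (x : G) : ℝ := (-1 : ℝ) ^ (x k).val

/-- Walsh functions `w_n = ∏ r_k^{n_k}` (binary digits `n_k` of `n`). -/
def walsh (n : ℕ) (x : G) : ℝ :=
  ∏ k ∈ Finset.range (n + 1), if n.testBit k then rade k x else 1

/-- Walsh–Dirichlet kernel `D_n = ∑_{k<n} w_k`. -/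
def D (n : ℕ) (x : G) : ℝ := ∑ k ∈ Finset.range n, walsh k x

/-- Walsh–Fejér kernel `K_n = (1/n) ∑_{k=1}^n D_k`. -/
def K (n : ℕ) (x : G) : ℝ := (1 / n) * ∑ k ∈ Finset.Icc 1 n, D k x

/-- Binary variation `V(n) = n_0 + ∑_{k≥1} |n_k - n_{k-1}|`. -/
def V (n : ℕ) : ℕ :=
  (if n.testBit 0 then 1 else 0) +
    ∑ k ∈ Finset.Icc 1 (n + 1), if n.testBit k ≠ n.testBit (k - 1) then 1 else 0

/-- `|n|`: index of the highest nonzero binary digit of `n`. -/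
def hi (n : ℕ) : ℕ := Nat.log 2 n

/-- `[n]`: index of the lowest nonzero binary digit of `n`. -/
def lo (n : ℕ) : ℕ := padicValNat 2 n

/-- `d(n) = |n| - [n]`. -/
def dd (n : ℕ) : ℕ := hi n - lo n

/-- A dyadic martingale: `F n` depends only on the first `n` coordinates, and
`F n` is the average of the two possible extensions, i.e. the martingale property
with respect to the dyadic filtration. -/
def IsDyadicMartingale (F : ℕ → G → ℝ) : Prop :=
  (∀ n x y, (∀ k < n, x k = y k) → F n x = F n y) ∧
  (∀ n x, F n x = (F (n+1) x + F (n+1) (Function.update x n (x n + 1))) / 2)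

/-- `k`-th Walsh–Fourier coefficient of a martingale,
`F̂(k) = lim_n ∫ F_n w_k dμ` (the integrals are eventually constant). -/
def mcoeff (F : ℕ → G → ℝ) (k : ℕ) : ℝ := ∫ x, F (k+1) x * walsh k x ∂μG

/-- Partial sums `S_m F` of the Walsh–Fourier series of a martingale. -/
def S (F : ℕ → G → ℝ) (m : ℕ) (x : G) : ℝ := ∑ j ∈ Finset.range m, mcoeff F j * walsh j x

/-- Fejér means `σ_n F = (1/n) ∑_{k=1}^n S_k F`. -/
def σ (F : ℕ → G → ℝ) (n : ℕ) (x : G) : ℝ := (1 / n) * ∑ k ∈ Finset.Icc 1 n, S F k x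

/-- `H_p` quasi-norm of a martingale: `‖sup_n |F_n|‖_{L_p}`. -/
def HpNorm (p : ℝ) (F : ℕ → G → ℝ) : ℝ≥0∞ :=
  (∫⁻ x, (⨆ n, (‖F n x‖₊ : ℝ≥0∞)) ^ p ∂μG) ^ (1 / p)

/-- Membership in the martingale Hardy space `H_p(G)`. -/
def MemHp (p : ℝ) (F : ℕ → G → ℝ) : Prop := IsDyadicMartingale F ∧ HpNorm p F < ⊤

/-- `L_p` quasi-norm of a function on `G`. -/
def LpN (p : ℝ) (f : G → ℝ) : ℝ≥0∞ := (∫⁻ x, (‖f x‖₊ : ℝ≥0∞) ^ p ∂μG) ^ (1 / p)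

/-- Weak `L_p` quasi-norm: `‖f‖_{L_{p,∞}} = sup_{λ>0} λ μ(|f|>λ)^{1/p}`. -/
def wLp (p : ℝ) (f : G → ℝ) : ℝ≥0∞ :=
  ⨆ t : ℝ≥0, (t : ℝ≥0∞) * (μG {x | (t : ℝ) < |f x|}) ^ (1 / p)

/-- Walsh–Fourier coefficient of an integrable function. -/
def fcoeff (f : G → ℝ) (j : ℕ) : ℝ := ∫ x, f x * walsh j x ∂μG

/-- Partial sums of the Walsh–Fourier series of a function. -/
def Sf (f : G → ℝ) (m : ℕ) (x : G) : ℝ := ∑ j ∈ Finset.range m, fcoeff f j * walsh j x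

/-- Fejér means of the Walsh–Fourier series of a function. -/
def σf (f : G → ℝ) (n : ℕ) (x : G) : ℝ := (1 / n) * ∑ k ∈ Finset.Icc 1 n, Sf f k x

/-- The martingale `(S_{2^m} g)_m` generated by a function `g`; used to interpret the
`H_p` norm of a function such as `σ_n F`. -/
def funMart (g : G → ℝ) : ℕ → G → ℝ := fun m => Sf g (2 ^ m)

/-- Modulus of continuity in `H_p`: `ω_{H_p}(1/2^n, F) = ‖F - S_{2^n} F‖_{H_p}`,
where `F - S_{2^n}F` is the martingale with `m`-th term `F_m - S_{min(2^n, 2^m)}F`. -/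
def ωHp (p : ℝ) (n : ℕ) (F : ℕ → G → ℝ) : ℝ≥0∞ :=
  HpNorm p (fun m x => F m x - S F (min (2 ^ n) (2 ^ m)) x)

/-- The a.e. limit of a martingale (as a limsup, which agrees a.e. with the limit
for martingales in `H_p`). -/
def mLim (F : ℕ → G → ℝ) (x : G) : ℝ := Filter.limsup (fun m => F m x) Filter.atTop

/-- The set `E_l := I_{l+1}(e_{l-1} + e_l)`, with the convention
`I_1(e_{-1}+e_0) = I_2(e_0+e_1)` for `l = 0`. -/
def Eset (l : ℕ) : Set G :=
  if l = 0 then cyl 2 (e 0 + e 1) else cyl (l + 1) (e (l - 1) + e l)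

/-! Write `Φ_n = n K_n` (`fejerSum`). If `2^L ∣ a` and `j ≤ 2^L`, then `w_{a+i} = w_a w_i` for
`i < 2^L`, whence `Φ_{a+j} = Φ_a + j D_a + w_a Φ_j`. Applied with `a` the top block of `n` and `j`
the lower blocks (so `j < 2^l`, the blocks being separated), this reduces the estimate, by induction
on the number of blocks, to a single block `q = 2^l + ⋯ + 2^m`, at the cost of
`j |D_q| ≤ 2^l ∑_{k=l}^m D_{2^k}`. Since `q + 2^l = 2^{m+1}`, the same identity bounds `|Φ_q|` by
`|Φ_{2^{m+1}}| + 2^l |D_q| + |Φ_{2^l}|`, and `D_{2^k} = 2^k 1_{I_k}` gives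
`|Φ_{2^{m+1}}| ≤ 4 |Φ_{2^m}|`. -/

open Finset

lemma rade_eq (k : ℕ) (x : G) : rade k x = if x k = 0 then 1 else -1 := by
  unfold rade
  generalize x k = a
  fin_cases a
  · rfl
  · show (-1 : ℝ) ^ 1 = -1
    norm_num

lemma abs_rade (k : ℕ) (x : G) : |rade k x| = 1 := by
  rw [rade_eq]
  split_ifs <;> simp

lemma mem_I₀_succ {k : ℕ} {x : G} : x ∈ I₀ (k + 1) ↔ x ∈ I₀ k ∧ x k = 0 :=
  Nat.forall_lt_succ_right

lemma walsh_eq_prod_range {n N : ℕ} (hN : n < N) (x : G) :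
    walsh n x = ∏ k ∈ range N, if n.testBit k then rade k x else 1 := by
  refine prod_subset (range_subset_range.2 hN) fun k _ hk => ?_
  have hnk : n < 2 ^ k := Nat.lt_two_pow_self.trans_le
    (Nat.pow_le_pow_right two_pos (by simp at hk; omega))
  simp [Nat.testBit_lt_two_pow hnk]

lemma abs_walsh (n : ℕ) (x : G) : |walsh n x| = 1 := by
  rw [walsh, abs_prod]
  refine prod_eq_one fun k _ => ?_
  split_ifs
  · exact abs_rade k x
  · exact abs_one

/-- Digits of `a` below `L` vanish and those of `j` from `L` on, so the Walsh factors split. -/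
lemma walsh_add {L a j : ℕ} (ha : 2 ^ L ∣ a) (hj : j < 2 ^ L) (x : G) :
    walsh (a + j) x = walsh a x * walsh j x := by
  obtain ⟨b, rfl⟩ := ha
  have hN : ∀ n ≤ 2 ^ L * b + j, n < 2 ^ L * b + j + 1 := fun n hn => Nat.lt_succ_of_le hn
  rw [walsh_eq_prod_range (hN _ le_rfl), walsh_eq_prod_range (hN _ (Nat.le_add_right _ _)),
    walsh_eq_prod_range (hN _ (Nat.le_add_left _ _)), ← prod_mul_distrib]
  refine prod_congr rfl fun k _ => ?_
  have h0 := Nat.testBit_two_pow_mul_add b (Nat.two_pow_pos L) k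
  rw [add_zero] at h0
  rw [Nat.testBit_two_pow_mul_add b hj, h0]
  by_cases hk : k < L
  · simp [hk]
  · have hjk : j.testBit k = false := Nat.testBit_lt_two_pow
      (hj.trans_le (Nat.pow_le_pow_right two_pos (not_lt.1 hk)))
    simp [hk, hjk]

lemma D_add {L a j : ℕ} (ha : 2 ^ L ∣ a) (hj : j ≤ 2 ^ L) (x : G) :
    D (a + j) x = D a x + walsh a x * D j x := by
  rw [D, D, D, sum_range_add, mul_sum]
  congr 1
  exact sum_congr rfl fun i hi => walsh_add ha ((mem_range.1 hi).trans_le hj) x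

lemma abs_D_add_le {L a j : ℕ} (ha : 2 ^ L ∣ a) (hj : j ≤ 2 ^ L) (x : G) :
    |D (a + j) x| ≤ |D a x| + |D j x| := by
  rw [D_add ha hj, ← one_mul |D j x|, ← abs_walsh a x, ← abs_mul]
  exact abs_add_le _ _

def fejerSum (n : ℕ) (x : G) : ℝ := ∑ k ∈ range n, D (k + 1) x

lemma natCast_mul_K (n : ℕ) (x : G) : (n : ℝ) * K n x = fejerSum n x := by
  have hsum : ∑ k ∈ Icc 1 n, D k x = fejerSum n x := by
    rw [fejerSum, range_eq_Ico, sum_Ico_add' (fun k => D k x), zero_add, Ico_add_one_right_eq_Icc]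
  rcases eq_or_ne n 0 with rfl | hn
  · simp [fejerSum]
  · rw [K, hsum, ← mul_assoc, mul_one_div_cancel (by exact_mod_cast hn), one_mul]

lemma fejerSum_add {L a j : ℕ} (ha : 2 ^ L ∣ a) (hj : j ≤ 2 ^ L) (x : G) :
    fejerSum (a + j) x = fejerSum a x + j * D a x + walsh a x * fejerSum j x := by
  have hD : ∀ i ∈ range j, D (a + i + 1) x = D a x + walsh a x * D (i + 1) x :=
    fun i hi => D_add ha ((mem_range.1 hi).trans_le hj) x
  rw [fejerSum, fejerSum, fejerSum, sum_range_add, sum_congr rfl hD, sum_add_distrib,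
    sum_const, card_range, nsmul_eq_mul, mul_sum, add_assoc]

lemma abs_fejerSum_add_le {L a j : ℕ} (ha : 2 ^ L ∣ a) (hj : j ≤ 2 ^ L) (x : G) :
    |fejerSum (a + j) x| ≤ |fejerSum a x| + j * |D a x| + |fejerSum j x| := by
  rw [fejerSum_add ha hj]
  calc _ ≤ |fejerSum a x| + |(j : ℝ) * D a x| + |walsh a x * fejerSum j x| :=
        abs_add_three _ _ _
    _ = _ := by rw [abs_mul, abs_mul, abs_walsh, one_mul, Nat.abs_cast]

lemma walsh_two_pow (k : ℕ) (x : G) : walsh (2 ^ k) x = rade k x := by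
  rw [walsh, prod_eq_single_of_mem k (mem_range.2 (Nat.lt_two_pow_self.trans (Nat.lt_succ_self _)))]
  · simp [Nat.testBit_two_pow_self]
  · intro t _ htk
    simp [Nat.testBit_two_pow_of_ne (Ne.symm htk)]

lemma walsh_eq_one_of_mem_I₀ {k j : ℕ} {x : G} (hx : x ∈ I₀ k) (hj : j < 2 ^ k) :
    walsh j x = 1 := by
  refine prod_eq_one fun t _ => ?_
  split_ifs with ht
  · have htk : t < k := (Nat.pow_lt_pow_iff_right (by norm_num)).1
      ((Nat.ge_two_pow_of_testBit ht).trans_lt hj)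
    simp [rade_eq, hx t htk]
  · rfl

lemma D_eq_of_mem_I₀ {k j : ℕ} {x : G} (hx : x ∈ I₀ k) (hj : j ≤ 2 ^ k) : D j x = j := by
  rw [D, sum_congr rfl fun i hi => walsh_eq_one_of_mem_I₀ hx ((mem_range.1 hi).trans_le hj)]
  simp

lemma D_two_pow (k : ℕ) (x : G) : D (2 ^ k) x = (I₀ k).indicator (fun _ => 2 ^ k) x := by
  induction k with
  | zero => simp [D, walsh, I₀, cyl]
  | succ k ih =>
    rw [pow_succ, mul_two, D_add dvd_rfl le_rfl, walsh_two_pow, ih, rade_eq]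
    by_cases hx : x ∈ I₀ k <;> by_cases hxk : x k = 0 <;>
      simp [mem_I₀_succ, hx, hxk, pow_succ, mul_two]

lemma D_two_pow_nonneg (k : ℕ) (x : G) : 0 ≤ D (2 ^ k) x := by
  rw [D_two_pow]
  exact Set.indicator_nonneg (fun _ _ => by positivity) x

lemma two_pow_mul_D_two_pow_le (k : ℕ) (x : G) :
    2 ^ k * D (2 ^ k) x ≤ 2 * |fejerSum (2 ^ k) x| := by
  by_cases hx : x ∈ I₀ k
  · have hsum : fejerSum (2 ^ k) x = ∑ i ∈ range (2 ^ k), ((i : ℝ) + 1) :=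
      sum_congr rfl fun i hi => by
        rw [D_eq_of_mem_I₀ hx (mem_range.1 hi), Nat.cast_succ]
    have hgauss : (∑ i ∈ range (2 ^ k), ((i : ℝ) + 1)) * 2 = 2 ^ k * (2 ^ k + 1) := by
      have := sum_range_id_mul_two (2 ^ k + 1)
      rw [sum_range_succ', add_zero, Nat.add_sub_cancel, Nat.mul_comm (2 ^ k + 1)] at this
      exact_mod_cast this
    rw [D_two_pow, Set.indicator_of_mem hx, hsum,
      abs_of_nonneg (sum_nonneg fun i _ => by positivity)]
    nlinarith [pow_pos (two_pos : (0 : ℝ) < 2) k]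
  · rw [D_two_pow, Set.indicator_of_notMem hx, mul_zero]
    positivity

lemma abs_fejerSum_two_pow_succ_le (k : ℕ) (x : G) :
    |fejerSum (2 ^ (k + 1)) x| ≤ 4 * |fejerSum (2 ^ k) x| := by
  have h := abs_fejerSum_add_le (a := 2 ^ k) dvd_rfl le_rfl x
  rw [← mul_two, ← pow_succ, Nat.cast_pow, Nat.cast_ofNat, abs_of_nonneg (D_two_pow_nonneg k x)]
    at h
  linarith [two_pow_mul_D_two_pow_le k x]

lemma abs_fejerSum_two_pow (k : ℕ) (x : G) :
    |fejerSum (2 ^ k) x| = 2 ^ k * |K (2 ^ k) x| := by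
  rw [← natCast_mul_K, abs_mul, Nat.abs_cast, Nat.cast_pow, Nat.cast_ofNat]

lemma sum_Icc_two_pow_add {l m : ℕ} (h : l ≤ m + 1) :
    ∑ k ∈ Icc l m, 2 ^ k + 2 ^ l = 2 ^ (m + 1) := by
  induction m with
  | zero => interval_cases l <;> simp
  | succ m ih =>
    rcases h.lt_or_eq with h | rfl
    · rw [sum_Icc_succ_top (by omega), add_right_comm, ih (by omega), pow_succ _ (m + 1), mul_two]
    · simp

lemma two_pow_dvd_sum_Icc_two_pow (l m : ℕ) : 2 ^ l ∣ ∑ k ∈ Icc l m, 2 ^ k :=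
  dvd_sum fun _ hk => pow_dvd_pow 2 (mem_Icc.1 hk).1

lemma abs_D_sum_Icc_two_pow_le (l m : ℕ) (x : G) :
    |D (∑ k ∈ Icc l m, 2 ^ k) x| ≤ ∑ k ∈ Icc l m, D (2 ^ k) x := by
  induction m with
  | zero =>
    rcases Nat.eq_zero_or_pos l with rfl | hl
    · simpa using (abs_of_nonneg (D_two_pow_nonneg 0 x)).le
    · simp [Icc_eq_empty_of_lt hl, D]
  | succ m ih =>
    by_cases hl : l ≤ m + 1
    · have hle : ∑ k ∈ Icc l m, 2 ^ k ≤ 2 ^ (m + 1) := by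
        rw [← sum_Icc_two_pow_add (by omega : l ≤ m + 1)]
        exact Nat.le_add_right _ _
      rw [sum_Icc_succ_top hl, sum_Icc_succ_top hl, add_comm, add_comm _ (D _ x)]
      calc _ ≤ |D (2 ^ (m + 1)) x| + |D (∑ k ∈ Icc l m, 2 ^ k) x| := abs_D_add_le dvd_rfl hle x
        _ ≤ _ := by rw [abs_of_nonneg (D_two_pow_nonneg _ x)]; linarith
    · simp [Icc_eq_empty (by omega : ¬ l ≤ m + 1), D]

lemma abs_fejerSum_sum_Icc_two_pow_le {l m : ℕ} (hlm : l ≤ m) (x : G) :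
    |fejerSum (∑ k ∈ Icc l m, 2 ^ k) x| ≤
      4 * (|fejerSum (2 ^ l) x| + |fejerSum (2 ^ m) x| + 2 ^ l * ∑ k ∈ Icc l m, D (2 ^ k) x) := by
  have hsplit := fejerSum_add (two_pow_dvd_sum_Icc_two_pow l m) le_rfl x
  rw [sum_Icc_two_pow_add (by omega), Nat.cast_pow, Nat.cast_ofNat] at hsplit
  set b := ∑ k ∈ Icc l m, 2 ^ k
  have hD : 2 ^ l * |D b x| ≤ 2 ^ l * ∑ k ∈ Icc l m, D (2 ^ k) x :=
    mul_le_mul_of_nonneg_left (abs_D_sum_Icc_two_pow_le l m x) (by positivity)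
  have hsum_nonneg : 0 ≤ 2 ^ l * ∑ k ∈ Icc l m, D (2 ^ k) x :=
    mul_nonneg (by positivity) (sum_nonneg fun k _ => D_two_pow_nonneg k x)
  calc |fejerSum b x|
      = |fejerSum (2 ^ (m + 1)) x - 2 ^ l * D b x - walsh b x * fejerSum (2 ^ l) x| := by
        rw [hsplit]; ring_nf
    _ ≤ |fejerSum (2 ^ (m + 1)) x| + |2 ^ l * D b x| + |walsh b x * fejerSum (2 ^ l) x| :=
        (abs_sub _ _).trans (add_le_add_left (abs_sub _ _) _)
    _ = |fejerSum (2 ^ (m + 1)) x| + 2 ^ l * |D b x| + |fejerSum (2 ^ l) x| := by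
        rw [abs_mul, abs_mul, abs_walsh, one_mul, abs_of_nonneg (by positivity : (0 : ℝ) ≤ 2 ^ l)]
    _ ≤ _ := by linarith [abs_fejerSum_two_pow_succ_le m x, abs_nonneg (fejerSum (2 ^ l) x)]

lemma sum_blocks_lt_two_pow {s L : ℕ} {l m : ℕ → ℕ} (hlm : ∀ i < s, l i ≤ m i)
    (hgap : ∀ i, i + 1 < s → m (i + 1) < l i) (hL : 0 < s → m 0 < L) :
    ∑ i ∈ range s, ∑ k ∈ Icc (l i) (m i), 2 ^ k < 2 ^ L := by
  induction s generalizing l m L with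
  | zero => simp
  | succ s ih =>
    have htail : ∑ i ∈ range s, ∑ k ∈ Icc (l (i + 1)) (m (i + 1)), 2 ^ k < 2 ^ l 0 :=
      ih (fun i hi => hlm (i + 1) (by omega)) (fun i hi => hgap (i + 1) (by omega))
        (fun hs => hgap 0 (by omega))
    have hhead := sum_Icc_two_pow_add (Nat.le_succ_of_le (hlm 0 s.succ_pos))
    rw [sum_range_succ']
    calc _ < 2 ^ (m 0 + 1) := by omega
      _ ≤ 2 ^ L := Nat.pow_le_pow_right two_pos (hL s.succ_pos)

lemma abs_fejerSum_sum_blocks_le {s : ℕ} {l m : ℕ → ℕ} (hlm : ∀ i < s, l i ≤ m i)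
    (hgap : ∀ i, i + 1 < s → m (i + 1) < l i) (x : G) :
    |fejerSum (∑ i ∈ range s, ∑ k ∈ Icc (l i) (m i), 2 ^ k) x| ≤
      5 * ∑ i ∈ range s, (|fejerSum (2 ^ l i) x| + |fejerSum (2 ^ m i) x|
        + 2 ^ l i * ∑ k ∈ Icc (l i) (m i), D (2 ^ k) x) := by
  induction s generalizing l m with
  | zero => simp [fejerSum]
  | succ s ih =>
    have hlm' : ∀ i < s, l (i + 1) ≤ m (i + 1) := fun i hi => hlm (i + 1) (by omega)
    have hgap' : ∀ i, i + 1 < s → m (i + 1 + 1) < l (i + 1) := fun i hi => hgap (i + 1) (by omega)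
    have htail := sum_blocks_lt_two_pow hlm' hgap' (fun _ => hgap 0 (by omega))
    have hsplit := abs_fejerSum_add_le (two_pow_dvd_sum_Icc_two_pow (l 0) (m 0)) htail.le x
    set tail := ∑ i ∈ range s, ∑ k ∈ Icc (l (i + 1)) (m (i + 1)), 2 ^ k
    have htail_real : (tail : ℝ) ≤ 2 ^ l 0 := by exact_mod_cast htail.le
    have hcross := mul_le_mul htail_real (abs_D_sum_Icc_two_pow_le (l 0) (m 0) x)
      (abs_nonneg _) (by positivity)
    have hhead := abs_fejerSum_sum_Icc_two_pow_le (hlm 0 s.succ_pos) x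
    have htail_le := ih hlm' hgap'
    have hnonneg : 0 ≤ 2 ^ l 0 * ∑ k ∈ Icc (l 0) (m 0), D (2 ^ k) x :=
      mul_nonneg (by positivity) (sum_nonneg fun k _ => D_two_pow_nonneg k x)
    rw [sum_range_succ', sum_range_succ', add_comm]
    linarith [abs_nonneg (fejerSum (2 ^ l 0) x), abs_nonneg (fejerSum (2 ^ m 0) x)]

/-- pointwise upper bound for `|n K_n|` in terms of the blocks of the
binary expansion of `n` and the variation `V(n)`. -/
theorem fejer_block_upper_bound :
    ∃ c : ℝ, 0 < c ∧ ∀ (s : ℕ) (l m : ℕ → ℕ) (n : ℕ),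
      1 ≤ s → (∀ i < s, l i ≤ m i) → (∀ i, i + 1 < s → m (i + 1) + 2 ≤ l i) →
      n = ∑ i ∈ Finset.range s, ∑ k ∈ Finset.Icc (l i) (m i), 2 ^ k →
      ∀ x : G, |(n : ℝ) * K n x| ≤
        c * (∑ A ∈ Finset.range s,
          ((2 : ℝ) ^ l A * |K (2 ^ l A) x| + (2 : ℝ) ^ m A * |K (2 ^ m A) x|
            + (2 : ℝ) ^ l A * ∑ k ∈ Finset.Icc (l A) (m A), D (2 ^ k) x)) + c * V n := by
  refine ⟨5, by norm_num, fun s l m n _ hlm hgap hn x => ?_⟩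
  have hbound := abs_fejerSum_sum_blocks_le hlm (fun i hi => by linarith [hgap i hi]) x
  simp only [abs_fejerSum_two_pow] at hbound
  rw [natCast_mul_K, hn]
  linarith [(Nat.cast_nonneg (V n) : (0 : ℝ) ≤ V n)]
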